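/- For every real number s there exists a constant C > 0 such that for every real c ≥ 0 the linear operator P_c on ℓ²(ℤ, ℂ) defined by (P_c w)(n) = (1 + c + n²)^{(1−s)/2} · [(1 + c + (n+1)²)^{s/2} − (1 + c + n²)^{s/2}] · w(n+1) is bounded with operator norm ‖P_c‖ ≤ C. -/
import Mathlib

open scoped ENNReal
open Set in
lemma mvt_rpow (t a b : ℝ) (ha : 1 ≤ a) (hb : 1 ≤ b) (hba : b ≤ 3 * a) (hab : a ≤ 3 * b) :
    |b ^ t - a ^ t| ≤ |t| * 3 ^ |t - 1| * a ^ (t - 1) * |b - a| := by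
  have ha0 : (0:ℝ) < a := lt_of_lt_of_le one_pos ha
  set m := min a b with hm
  set M := max a b with hM
  have hm1 : 1 ≤ m := le_min ha hb
  have hmM : m ≤ M := min_le_max
  have hM3 : M ≤ 3 * a := max_le (by linarith) hba
  have h3m : a ≤ 3 * m := by
    rcases le_total a b with h | h
    · simp [hm, min_eq_left h]; linarith
    · simp [hm, min_eq_right h]; linarith
  have key : ∀ x ∈ Icc m M, x ^ (t - 1) ≤ 3 ^ |t - 1| * a ^ (t - 1) := by
    intro x hx
    have hx1 : 1 ≤ x := le_trans hm1 hx.1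
    have hx0 : (0:ℝ) < x := lt_of_lt_of_le one_pos hx1
    rcases le_or_gt 0 (t - 1) with h | h
    · have : x ^ (t - 1) ≤ (3 * a) ^ (t - 1) :=
        Real.rpow_le_rpow hx0.le (hx.2.trans hM3) h
      rw [Real.mul_rpow (by norm_num) ha0.le] at this
      rwa [abs_of_nonneg h]
    · have hx3 : a / 3 ≤ x := by
        have := h3m.trans (by linarith [hx.1] : 3 * m ≤ 3 * x)
        linarith
      have h1 : x ^ (t - 1) ≤ (a / 3) ^ (t - 1) :=
        Real.rpow_le_rpow_of_nonpos (by linarith) hx3 h.le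
      have h2 : (a / 3 : ℝ) ^ (t - 1) = 3 ^ (-(t - 1)) * a ^ (t - 1) := by
        rw [div_eq_mul_inv, Real.mul_rpow ha0.le (by positivity),
          Real.inv_rpow (by norm_num), ← Real.rpow_neg (by norm_num)]
        ring
      rw [abs_of_neg h]
      calc x ^ (t - 1) ≤ (a / 3) ^ (t - 1) := h1
        _ = 3 ^ (-(t - 1)) * a ^ (t - 1) := h2
  have hderiv : ∀ x ∈ Icc m M,
      HasDerivWithinAt (fun y : ℝ => y ^ t) (t * x ^ (t - 1)) (Icc m M) x := by
    intro x hx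
    have hx0 : x ≠ 0 := by
      have : 1 ≤ x := le_trans hm1 hx.1
      positivity
    exact (Real.hasDerivAt_rpow_const (Or.inl hx0)).hasDerivWithinAt
  have bound : ∀ x ∈ Ico m M, ‖t * x ^ (t - 1)‖ ≤ |t| * (3 ^ |t - 1| * a ^ (t - 1)) := by
    intro x hx
    have hxIcc : x ∈ Icc m M := Ico_subset_Icc_self hx
    have hx1 : 1 ≤ x := le_trans hm1 hxIcc.1
    rw [Real.norm_eq_abs, abs_mul, abs_of_nonneg (Real.rpow_nonneg (by linarith) _)]
    exact mul_le_mul_of_nonneg_left (key x hxIcc) (abs_nonneg t)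
  have h := norm_image_sub_le_of_norm_deriv_le_segment' hderiv bound M ⟨hmM, le_refl M⟩
  have hdiff : M - m = |b - a| := by
    rcases le_total a b with hcase | hcase
    · rw [hM, hm, max_eq_right hcase, min_eq_left hcase, abs_of_nonneg (by linarith)]
    · rw [hM, hm, max_eq_left hcase, min_eq_right hcase, abs_of_nonpos (by linarith)]; ring
  have habs : ‖M ^ t - m ^ t‖ = |b ^ t - a ^ t| := by
    rcases le_total a b with hcase | hcase
    · rw [hM, hm, max_eq_right hcase, min_eq_left hcase, Real.norm_eq_abs]
    · rw [hM, hm, max_eq_left hcase, min_eq_right hcase, Real.norm_eq_abs, abs_sub_comm]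
  rw [habs, hdiff] at h
  calc |b ^ t - a ^ t| ≤ |t| * (3 ^ |t - 1| * a ^ (t - 1)) * |b - a| := h
    _ = |t| * 3 ^ |t - 1| * a ^ (t - 1) * |b - a| := by ring

lemma mult_bound (s c : ℝ) (hc : 0 ≤ c) (n : ℤ) :
    |(1 + c + (n : ℝ) ^ 2) ^ ((1 - s) / 2) *
        ((1 + c + ((n : ℝ) + 1) ^ 2) ^ (s / 2) - (1 + c + (n : ℝ) ^ 2) ^ (s / 2))| ≤
      |s / 2| * 3 ^ |s / 2 - 1| * Real.sqrt 5 := by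
  set x : ℝ := (n : ℝ) with hx
  set a : ℝ := 1 + c + x ^ 2 with hadef
  set b : ℝ := 1 + c + (x + 1) ^ 2 with hbdef
  have ha : 1 ≤ a := by nlinarith [sq_nonneg x]
  have hb : 1 ≤ b := by nlinarith [sq_nonneg (x + 1)]
  have ha0 : (0:ℝ) < a := by linarith
  have hba : b ≤ 3 * a := by nlinarith [sq_nonneg (2 * x - 1)]
  have hab : a ≤ 3 * b := by nlinarith [sq_nonneg (2 * x + 3)]
  have key := mvt_rpow (s / 2) a b ha hb hba hab
  have hdiff : b - a = 2 * x + 1 := by rw [hadef, hbdef]; ring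
  have h5 : |b - a| ≤ Real.sqrt 5 * a ^ ((1:ℝ) / 2) := by
    rw [hdiff]
    have h1 : |2 * x + 1| = Real.sqrt ((2 * x + 1) ^ 2) := (Real.sqrt_sq_eq_abs _).symm
    have h2 : (2 * x + 1) ^ 2 ≤ 5 * a := by nlinarith [sq_nonneg (x - 2)]
    calc |2 * x + 1| = Real.sqrt ((2 * x + 1) ^ 2) := h1
      _ ≤ Real.sqrt (5 * a) := Real.sqrt_le_sqrt h2
      _ = Real.sqrt 5 * Real.sqrt a := Real.sqrt_mul (by norm_num) a
      _ = Real.sqrt 5 * a ^ ((1:ℝ) / 2) := by rw [Real.sqrt_eq_rpow a]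
  have hKnn : (0:ℝ) ≤ |s / 2| * 3 ^ |s / 2 - 1| := by positivity
  have hone : a ^ ((1 - s) / 2) * (a ^ (s / 2 - 1) * a ^ ((1:ℝ) / 2)) = 1 := by
    rw [← Real.rpow_add ha0, ← Real.rpow_add ha0,
      show (1 - s) / 2 + (s / 2 - 1 + 1 / 2) = 0 by ring, Real.rpow_zero]
  calc |a ^ ((1 - s) / 2) * (b ^ (s / 2) - a ^ (s / 2))|
      = a ^ ((1 - s) / 2) * |b ^ (s / 2) - a ^ (s / 2)| := by
        rw [abs_mul, abs_of_nonneg (Real.rpow_nonneg ha0.le _)]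
    _ ≤ a ^ ((1 - s) / 2) * (|s / 2| * 3 ^ |s / 2 - 1| * a ^ (s / 2 - 1) * |b - a|) := by
        exact mul_le_mul_of_nonneg_left key (Real.rpow_nonneg ha0.le _)
    _ ≤ a ^ ((1 - s) / 2) *
          (|s / 2| * 3 ^ |s / 2 - 1| * a ^ (s / 2 - 1) * (Real.sqrt 5 * a ^ ((1:ℝ) / 2))) := by
        refine mul_le_mul_of_nonneg_left ?_ (Real.rpow_nonneg ha0.le _)
        exact mul_le_mul_of_nonneg_left h5 (by positivity)
    _ = |s / 2| * 3 ^ |s / 2 - 1| * Real.sqrt 5 *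
          (a ^ ((1 - s) / 2) * (a ^ (s / 2 - 1) * a ^ ((1:ℝ) / 2))) := by ring
    _ = |s / 2| * 3 ^ |s / 2 - 1| * Real.sqrt 5 := by rw [hone, mul_one]

lemma op_exists (g : ℤ → ℝ) (B : ℝ) (hB : 0 ≤ B) (hg : ∀ n, |g n| ≤ B) :
    ∃ P : lp (fun _ : ℤ => ℂ) 2 →L[ℂ] lp (fun _ : ℤ => ℂ) 2,
      (∀ w : lp (fun _ : ℤ => ℂ) 2, ∀ n : ℤ,
        (P w : ∀ _ : ℤ, ℂ) n = ((g n : ℝ) : ℂ) * (w : ∀ _ : ℤ, ℂ) (n + 1)) ∧ ‖P‖ ≤ B := by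
  have hp2 : ((2 : ℝ≥0∞)).toReal = 2 := by norm_num
  have hsum : ∀ w : lp (fun _ : ℤ => ℂ) 2, ∀ S : Finset ℤ,
      ∑ n ∈ S, ‖((g n : ℝ) : ℂ) * (w : ∀ _ : ℤ, ℂ) (n + 1)‖ ^ ((2 : ℝ≥0∞)).toReal ≤
        (B * ‖w‖) ^ ((2 : ℝ≥0∞)).toReal := by
    intro w S
    rw [hp2]
    have step1 : ∀ n : ℤ, ‖((g n : ℝ) : ℂ) * (w : ∀ _ : ℤ, ℂ) (n + 1)‖ ^ (2:ℝ) ≤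
        B ^ (2:ℝ) * ‖(w : ∀ _ : ℤ, ℂ) (n + 1)‖ ^ (2:ℝ) := by
      intro n
      have h1 : ‖((g n : ℝ) : ℂ) * (w : ∀ _ : ℤ, ℂ) (n + 1)‖ ≤
          B * ‖(w : ∀ _ : ℤ, ℂ) (n + 1)‖ := by
        rw [norm_mul, Complex.norm_real, Real.norm_eq_abs]
        exact mul_le_mul_of_nonneg_right (hg n) (norm_nonneg _)
      calc ‖((g n : ℝ) : ℂ) * (w : ∀ _ : ℤ, ℂ) (n + 1)‖ ^ (2:ℝ)
          ≤ (B * ‖(w : ∀ _ : ℤ, ℂ) (n + 1)‖) ^ (2:ℝ) :=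
            Real.rpow_le_rpow (norm_nonneg _) h1 (by norm_num)
        _ = B ^ (2:ℝ) * ‖(w : ∀ _ : ℤ, ℂ) (n + 1)‖ ^ (2:ℝ) :=
            Real.mul_rpow hB (norm_nonneg _)
    have step2 : ∑ n ∈ S, ‖(w : ∀ _ : ℤ, ℂ) (n + 1)‖ ^ (2:ℝ) ≤ ‖w‖ ^ (2:ℝ) := by
      have hmap : ∑ n ∈ S, ‖(w : ∀ _ : ℤ, ℂ) (n + 1)‖ ^ (2:ℝ) =
          ∑ m ∈ S.map (Equiv.addRight (1:ℤ)).toEmbedding, ‖(w : ∀ _ : ℤ, ℂ) m‖ ^ (2:ℝ) := by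
        rw [Finset.sum_map]
        rfl
      rw [hmap]
      have := lp.sum_rpow_le_norm_rpow (by rw [hp2]; norm_num : 0 < ((2:ℝ≥0∞)).toReal) w
        (S.map (Equiv.addRight (1:ℤ)).toEmbedding)
      rwa [hp2] at this
    calc ∑ n ∈ S, ‖((g n : ℝ) : ℂ) * (w : ∀ _ : ℤ, ℂ) (n + 1)‖ ^ (2:ℝ)
        ≤ ∑ n ∈ S, B ^ (2:ℝ) * ‖(w : ∀ _ : ℤ, ℂ) (n + 1)‖ ^ (2:ℝ) :=
          Finset.sum_le_sum fun n _ => step1 n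
      _ = B ^ (2:ℝ) * ∑ n ∈ S, ‖(w : ∀ _ : ℤ, ℂ) (n + 1)‖ ^ (2:ℝ) := by
          rw [Finset.mul_sum]
      _ ≤ B ^ (2:ℝ) * ‖w‖ ^ (2:ℝ) :=
          mul_le_mul_of_nonneg_left step2 (Real.rpow_nonneg hB _)
      _ = (B * ‖w‖) ^ (2:ℝ) := (Real.mul_rpow hB (norm_nonneg _)).symm
  have hmem : ∀ w : lp (fun _ : ℤ => ℂ) 2,
      Memℓp (fun n : ℤ => ((g n : ℝ) : ℂ) * (w : ∀ _ : ℤ, ℂ) (n + 1)) 2 :=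
    fun w => memℓp_gen' (hsum w)
  let L : lp (fun _ : ℤ => ℂ) 2 →ₗ[ℂ] lp (fun _ : ℤ => ℂ) 2 :=
    { toFun := fun w => ⟨fun n => ((g n : ℝ) : ℂ) * (w : ∀ _ : ℤ, ℂ) (n + 1), hmem w⟩
      map_add' := fun w v => by
        apply lp.ext
        funext n
        simp only [lp.coeFn_add, Pi.add_apply]
        show ((g n : ℝ) : ℂ) * ((w : ∀ _ : ℤ, ℂ) (n+1) + (v : ∀ _ : ℤ, ℂ) (n+1)) = _
        ring
      map_smul' := fun a w => by
        apply lp.ext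
        funext n
        simp only [lp.coeFn_smul, Pi.smul_apply, RingHom.id_apply, smul_eq_mul]
        show ((g n : ℝ) : ℂ) * (a * (w : ∀ _ : ℤ, ℂ) (n+1)) = _
        ring }
  have hLle : ∀ w, ‖L w‖ ≤ B * ‖w‖ := fun w =>
    lp.norm_le_of_forall_sum_le (by rw [hp2]; norm_num) (by positivity) (hsum w)
  refine ⟨L.mkContinuous B hLle, fun w n => rfl, L.mkContinuous_norm_le hB hLle⟩

/-- For every `s : ℝ` there is `C > 0` such that for every `c ≥ 0` the operator `P_c` on
`ℓ²(ℤ, ℂ)` defined by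
`(P_c w)(n) = (1 + c + n²)^{(1−s)/2} · [(1 + c + (n+1)²)^{s/2} − (1 + c + n²)^{s/2}] · w(n+1)`
is bounded with operator norm at most `C`. -/
theorem shift_weight_commutator_bounded (s : ℝ) :
    ∃ C > 0, ∀ c : ℝ, 0 ≤ c →
      ∃ P : lp (fun _ : ℤ => ℂ) 2 →L[ℂ] lp (fun _ : ℤ => ℂ) 2,
        (∀ w : lp (fun _ : ℤ => ℂ) 2, ∀ n : ℤ,
          (P w : ∀ _ : ℤ, ℂ) n =
            (((1 + c + (n : ℝ) ^ 2) ^ ((1 - s) / 2) *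
              ((1 + c + ((n : ℝ) + 1) ^ 2) ^ (s / 2) -
                (1 + c + (n : ℝ) ^ 2) ^ (s / 2)) : ℝ) : ℂ) *
              (w : ∀ _ : ℤ, ℂ) (n + 1)) ∧
        ‖P‖ ≤ C := by
  refine ⟨|s / 2| * 3 ^ |s / 2 - 1| * Real.sqrt 5 + 1, by positivity, fun c hc => ?_⟩
  obtain ⟨P, hP, hPnorm⟩ := op_exists
    (fun n : ℤ => (1 + c + (n : ℝ) ^ 2) ^ ((1 - s) / 2) *
      ((1 + c + ((n : ℝ) + 1) ^ 2) ^ (s / 2) - (1 + c + (n : ℝ) ^ 2) ^ (s / 2)))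
    (|s / 2| * 3 ^ |s / 2 - 1| * Real.sqrt 5 + 1)
    (by positivity)
    (fun n => (mult_bound s c hc n).trans (by linarith))
  exact ⟨P, hP, hPnorm⟩
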